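/- Let F be a finite field of characteristic ≠ 3, E/F the cubic extension of finite fields, and β ∈ E a generator of E over F. Let Y ⊆ ℙ⁴_F be the cubic threefold defined by Norm_{E/F}(u + βv + β²w) + x·y·(x−y) = 0 in homogeneous coordinates (u, v, w, x, y). Then the singular locus of Y is the single closed point m of degree 3 (with residue field E) given by x = y = 0 and the vanishing of two of the three Galois conjugates of u + βv + β²w; geometrically Y has exactly three singular points, conjugate under Gal(E/F). -/

import Mathlib

/-!
Write `ℓ_σ = u + σ(β) v + σ(β)² w` for the three embeddings `σ : E → Ω`; the values `σ(β)`
are distinct because `β` generates `E`. When `3 ≠ 0`, the partial derivatives of `xy(x - y)`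
in `x` and `y` vanish together only at `x = y = 0`. The partial derivatives of `∏ ℓ_σ` in
`u, v, w` are the Vandermonde combinations `∑ σ(β)ʲ ∏_{τ ≠ σ} ℓ_τ`, so they all vanish exactly
when two of the `ℓ_σ` vanish, which singles out one point for each pair of embeddings. The
Frobenius `z ↦ z^q` of `Ω` permutes the embeddings without fixed points (as `β ∉ F`), hence
cyclically, and so permutes the three points transitively.
-/

open MvPolynomial Function Finset

/-- The action of a field automorphism on points of projective space. -/
noncomputable def mapPoint {Ω F : Type} [Field Ω] [Field F] [Algebra F Ω]
    (g : Ω ≃ₐ[F] Ω) (p : Projectivization Ω (Fin 5 → Ω)) :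
    Projectivization Ω (Fin 5 → Ω) :=
  Projectivization.mk Ω (fun i => g (p.rep i))
    (fun h => p.rep_nonzero (funext fun i => g.injective (by
      simpa using congrFun h i)))

theorem three_ne_zero_of_ringChar_ne_three {R : Type*} [NonAssocSemiring R] [Nontrivial R]
    (hR : ringChar R ≠ 3) : (3 : R) ≠ 0 := by
  rw [Ne, (by norm_cast : (3 : R) = (3 : ℕ)), ringChar.spec, Nat.dvd_prime Nat.prime_three]
  exact mt (or_iff_left hR).mp CharP.ringChar_ne_one

theorem Derivation.leibniz_finsetProd {R A M ι : Type*} [CommSemiring R] [CommSemiring A]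
    [AddCommMonoid M] [Algebra R A] [Module A M] [Module R M] (D : Derivation R A M)
    [DecidableEq ι] (s : Finset ι) (f : ι → A) :
    D (∏ i ∈ s, f i) = ∑ i ∈ s, (∏ j ∈ s.erase i, f j) • D (f i) := by
  induction s using Finset.induction_on with
  | empty => simp
  | insert a s ha ih =>
    rw [prod_insert ha, sum_insert ha, erase_insert ha, D.leibniz, ih, smul_sum, add_comm]
    congr 1
    refine sum_congr rfl fun i hi => ?_
    rw [erase_insert_of_ne (ne_of_mem_of_not_mem hi ha).symm,
      prod_insert fun h => ha (mem_of_mem_erase h), mul_smul]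

theorem eq_zero_of_forall_sum_mul_pow_eq_zero {K ι : Type*} [Field K] [Fintype ι]
    {b v : ι → K} (hb : Injective b) (h : ∀ i < Fintype.card ι, ∑ j, v j * b j ^ i = 0) :
    v = 0 := by
  set e := Fintype.equivFin ι
  have := Matrix.eq_zero_of_forall_pow_sum_mul_pow_eq_zero (f := b ∘ e.symm) (v := v ∘ e.symm)
    (hb.comp e.symm.injective) fun i => by
      simpa [← e.symm.sum_comp] using h i i.isLt
  funext j
  simpa using congrFun this (e j)

theorem eq_zero_of_critical_mul_mul_sub {K : Type*} [Field K] (h3 : (3 : K) ≠ 0) {x y : K}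
    (hx : 2 * x * y - y ^ 2 = 0) (hy : x ^ 2 - 2 * x * y = 0) : x = 0 ∧ y = 0 := by
  have hy0 : y = 0 := by
    rcases mul_eq_zero.mp (show x * (x - 2 * y) = 0 by linear_combination hy) with h | h
    · simpa [h] using hx
    · have : 3 * y ^ 2 = 0 := by linear_combination hx - 2 * y * h
      simpa [h3] using this
  exact ⟨by simpa [hy0] using hy, hy0⟩

section threefold

variable {K ι : Type*} [Field K] [Fintype ι]

noncomputable def conjugateForm (c : K) : MvPolynomial (Fin 5) K :=
  X 0 + C c * X 1 + C (c ^ 2) * X 2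

noncomputable def threefoldCubic (b : ι → K) : MvPolynomial (Fin 5) K :=
  ∏ j, conjugateForm (b j) + X 3 * X 4 * (X 3 - X 4)

@[simp]
theorem eval_conjugateForm (c : K) (a : Fin 5 → K) :
    eval a (conjugateForm c) = a 0 + c * a 1 + c ^ 2 * a 2 := by
  simp [conjugateForm]

theorem eval_pderiv_conjugateForm (c : K) (a : Fin 5 → K) (i : Fin 5) :
    eval a (pderiv i (conjugateForm c)) = ![1, c, c ^ 2, 0, 0] i := by
  fin_cases i <;> simp [conjugateForm, pderiv_X]

theorem eval_pderiv_threefoldCubic [DecidableEq ι] (b : ι → K) (a : Fin 5 → K) (i : Fin 5) :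
    eval a (pderiv i (threefoldCubic b)) =
      ∑ j, (∏ k ∈ univ.erase j, (a 0 + b k * a 1 + b k ^ 2 * a 2)) * ![1, b j, b j ^ 2, 0, 0] i +
        ![0, 0, 0, 2 * a 3 * a 4 - a 4 ^ 2, a 3 ^ 2 - 2 * a 3 * a 4] i := by
  rw [threefoldCubic, map_add, Derivation.leibniz_finsetProd, map_add, map_sum]
  simp only [smul_eq_mul, map_mul, map_prod, eval_pderiv_conjugateForm, eval_conjugateForm]
  congr 1
  fin_cases i <;> simp [pderiv_X] <;> ring

theorem threefoldCubic_singular_iff (h3 : (3 : K) ≠ 0) (hι : Fintype.card ι = 3) {b : ι → K}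
    (hb : Injective b) (a : Fin 5 → K) :
    (eval a (threefoldCubic b) = 0 ∧ ∀ i, eval a (pderiv i (threefoldCubic b)) = 0) ↔
      a 3 = 0 ∧ a 4 = 0 ∧ ∃ σ τ, σ ≠ τ ∧
        a 0 + b σ * a 1 + b σ ^ 2 * a 2 = 0 ∧ a 0 + b τ * a 1 + b τ ^ 2 * a 2 = 0 := by
  classical
  have hd := eval_pderiv_threefoldCubic b a
  constructor
  · rintro ⟨-, hcrit⟩
    obtain ⟨hx, hy⟩ := eq_zero_of_critical_mul_mul_sub h3 (by simpa [hd] using hcrit 3)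
      (by simpa [hd] using hcrit 4)
    have hM := eq_zero_of_forall_sum_mul_pow_eq_zero hb
      (v := fun j => ∏ k ∈ univ.erase j, (a 0 + b k * a 1 + b k ^ 2 * a 2)) fun i hi => by
        rw [hι] at hi
        interval_cases i
        · simpa [hd] using hcrit 0
        · simpa [hd] using hcrit 1
        · simpa [hd] using hcrit 2
    have hother : ∀ j, ∃ k ≠ j, a 0 + b k * a 1 + b k ^ 2 * a 2 = 0 := fun j => by
      simpa [prod_eq_zero_iff] using congrFun hM j
    obtain ⟨σ⟩ : Nonempty ι := Fintype.card_pos_iff.mp (by omega)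
    obtain ⟨τ, -, hτ⟩ := hother σ
    obtain ⟨ρ, hρτ, hρ⟩ := hother τ
    exact ⟨hx, hy, ρ, τ, hρτ, hρ, hτ⟩
  · rintro ⟨hx, hy, σ, τ, hστ, hσ, hτ⟩
    have hM : ∀ j, ∏ k ∈ univ.erase j, (a 0 + b k * a 1 + b k ^ 2 * a 2) = 0 := fun j => by
      by_cases hj : j = σ
      · exact prod_eq_zero (mem_erase.mpr ⟨hj ▸ hστ.symm, mem_univ τ⟩) hτ
      · exact prod_eq_zero (mem_erase.mpr ⟨Ne.symm hj, mem_univ σ⟩) hσ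
    refine ⟨?_, fun i => ?_⟩
    · simp only [threefoldCubic, map_add, map_prod, map_mul, map_sub, eval_X, hx, hy]
      simpa using prod_eq_zero (mem_univ σ) hσ
    · rw [hd]
      fin_cases i <;> simp [hM, hx, hy]

end threefold

namespace Equiv.Perm

variable {α : Type*} [Fintype α] [DecidableEq α] {π : Perm α}

theorem isThreeCycle_of_card_eq_three (hα : Fintype.card α = 3) (hπ : ∀ x, π x ≠ x) :
    π.IsThreeCycle := by
  rw [← card_support_eq_three_iff, eq_univ_of_forall fun x => mem_support.mpr (hπ x), card_univ,
    hα]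

theorem apply_apply_ne_self_of_card_eq_three (hα : Fintype.card α = 3) (hπ : ∀ x, π x ≠ x)
    (x : α) : π (π x) ≠ x := by
  have hsq := (isThreeCycle_of_card_eq_three hα hπ).isThreeCycle_sq
  rw [← card_support_eq_three_iff, ← hα] at hsq
  exact mem_support.mp (eq_univ_of_card _ hsq ▸ mem_univ x)

theorem eq_or_eq_or_eq_of_card_eq_three (hα : Fintype.card α = 3) (hπ : ∀ x, π x ≠ x)
    (x y : α) : y = x ∨ y = π x ∨ y = π (π x) := by
  have horbit : ({x, π x, π (π x)} : Finset α) = univ :=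
    eq_univ_of_card _ <| hα ▸ card_eq_three.mpr ⟨x, π x, π (π x), (hπ x).symm,
      (apply_apply_ne_self_of_card_eq_three hα hπ x).symm, (hπ (π x)).symm, rfl⟩
  have hy : y ∈ ({x, π x, π (π x)} : Finset α) := horbit ▸ mem_univ y
  simpa using hy

theorem eq_apply_or_eq_apply_of_card_eq_three (hα : Fintype.card α = 3) (hπ : ∀ x, π x ≠ x)
    {x y : α} (hxy : x ≠ y) : y = π x ∨ x = π y := by
  rcases eq_or_eq_or_eq_of_card_eq_three hα hπ x y with rfl | rfl | rfl
  · exact absurd rfl hxy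
  · exact Or.inl rfl
  · right
    rcases eq_or_eq_or_eq_of_card_eq_three hα hπ x (π (π (π x))) with h | h | h
    · exact h.symm
    · exact absurd (π.injective h) (apply_apply_ne_self_of_card_eq_three hα hπ x)
    · exact absurd h (hπ _)

end Equiv.Perm

section singularPoint

variable {K : Type*} [Field K]

/-- The form `u + c v + c² w` takes the value `(c - s) (c - t)` at this vector. -/
def singularVector (s t : K) : Fin 5 → K := ![s * t, -(s + t), 1, 0, 0]

theorem singularVector_ne_zero (s t : K) : singularVector s t ≠ 0 :=
  fun h => by simpa [singularVector] using congrFun h 2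

noncomputable def singularPoint (s t : K) : Projectivization K (Fin 5 → K) :=
  Projectivization.mk K (singularVector s t) (singularVector_ne_zero s t)

theorem singularPoint_comm (s t : K) : singularPoint s t = singularPoint t s := by
  simp only [singularPoint, singularVector, mul_comm s, add_comm s]

theorem singularPoint_eq_singularPoint_iff {s t s' t' : K} :
    singularPoint s t = singularPoint s' t' ↔ s = s' ∧ t = t' ∨ s = t' ∧ t = s' := by
  constructor
  · intro h
    obtain ⟨a, ha⟩ := (Projectivization.mk_eq_mk_iff' K _ _ _ _).mp h
    simp only [singularVector] at ha
    have h0 := congrFun ha 0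
    have h1 := congrFun ha 1
    have h2 := congrFun ha 2
    simp only [Fin.isValue, Pi.smul_apply, Matrix.cons_val_zero, smul_eq_mul, Matrix.cons_val_one,
      Matrix.cons_val, mul_one] at h0 h1 h2
    subst h2
    simp only [one_mul] at h0 h1
    have : (s - s') * (s - t') = 0 := by linear_combination s * h1 + h0
    rcases mul_eq_zero.mp this with h | h
    · exact Or.inl ⟨by linear_combination h, by linear_combination h1 - h⟩
    · exact Or.inr ⟨by linear_combination h, by linear_combination h1 - h⟩
  · rintro (⟨rfl, rfl⟩ | ⟨rfl, rfl⟩)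
    · rfl
    · exact singularPoint_comm _ _

theorem eq_singularPoint_iff {s t : K} (hst : s ≠ t) (p : Projectivization K (Fin 5 → K)) :
    p = singularPoint s t ↔ p.rep 3 = 0 ∧ p.rep 4 = 0 ∧
      p.rep 0 + s * p.rep 1 + s ^ 2 * p.rep 2 = 0 ∧
      p.rep 0 + t * p.rep 1 + t ^ 2 * p.rep 2 = 0 := by
  constructor
  · rintro rfl
    obtain ⟨a, ha⟩ := Projectivization.exists_smul_eq_mk_rep K _ (singularVector_ne_zero s t)
    simp only [singularPoint, ← ha]
    simp only [singularVector, Fin.isValue, Pi.smul_apply, Matrix.cons_val, Matrix.cons_val_zero,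
      Matrix.cons_val_one, Units.smul_def, smul_eq_mul, mul_zero, true_and]
    constructor <;> ring
  · rintro ⟨h3, h4, hs, ht⟩
    have h1 : p.rep 1 = -(s + t) * p.rep 2 :=
      mul_left_cancel₀ (sub_ne_zero.mpr hst) (by linear_combination hs - ht)
    have h0 : p.rep 0 = s * t * p.rep 2 := by linear_combination hs - s * h1
    have h2 : p.rep 2 ≠ 0 := fun hw => p.rep_nonzero <| funext fun i => by
      fin_cases i <;> simp [h0, h1, hw, h3, h4]
    conv_lhs => rw [← p.mk_rep]
    refine (Projectivization.mk_eq_mk_iff' K _ _ _ _).mpr ⟨p.rep 2, funext fun i => ?_⟩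
    fin_cases i <;> simp [singularVector, h0, h1, h3, h4] <;> ring

variable {ι : Type*} [Fintype ι] [DecidableEq ι] {b : ι → K} {π : Equiv.Perm ι}

theorem setOf_eq_range_singularPoint (hι : Fintype.card ι = 3) (hπ : ∀ x, π x ≠ x)
    (hb : Injective b) :
    {p : Projectivization K (Fin 5 → K) | p.rep 3 = 0 ∧ p.rep 4 = 0 ∧ ∃ σ τ, σ ≠ τ ∧
        p.rep 0 + b σ * p.rep 1 + b σ ^ 2 * p.rep 2 = 0 ∧
        p.rep 0 + b τ * p.rep 1 + b τ ^ 2 * p.rep 2 = 0} =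
      Set.range fun x => singularPoint (b x) (b (π x)) := by
  ext p
  constructor
  · rintro ⟨h3, h4, σ, τ, hστ, hσ, hτ⟩
    have hp := (eq_singularPoint_iff (hb.ne hστ) p).mpr ⟨h3, h4, hσ, hτ⟩
    rcases π.eq_apply_or_eq_apply_of_card_eq_three hι hπ hστ with rfl | rfl
    · exact ⟨σ, hp.symm⟩
    · exact ⟨τ, by rw [hp, singularPoint_comm]⟩
  · rintro ⟨x, rfl⟩
    obtain ⟨h3, h4, hs, ht⟩ := (eq_singularPoint_iff (hb.ne (hπ x).symm) _).mp rfl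
    exact ⟨h3, h4, x, π x, (hπ x).symm, hs, ht⟩

theorem injective_singularPoint (hι : Fintype.card ι = 3) (hπ : ∀ x, π x ≠ x)
    (hb : Injective b) : Injective fun x => singularPoint (b x) (b (π x)) := by
  intro x y h
  rcases singularPoint_eq_singularPoint_iff.mp h with ⟨hxy, -⟩ | ⟨hxy, hyx⟩
  · exact hb hxy
  · refine absurd ?_ (π.apply_apply_ne_self_of_card_eq_three hι hπ y)
    rw [← hb hxy, hb hyx]

end singularPoint

section mapPoint

variable {Ω F : Type} [Field Ω] [Field F] [Algebra F Ω]

theorem mapPoint_mk (g : Ω ≃ₐ[F] Ω) (v : Fin 5 → Ω) (hv : v ≠ 0) :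
    mapPoint g (Projectivization.mk Ω v hv) = Projectivization.mk Ω (fun i => g (v i))
      (fun h => hv (funext fun i => g.injective (by simpa using congrFun h i))) := by
  obtain ⟨a, ha⟩ := Projectivization.exists_smul_eq_mk_rep Ω v hv
  rw [mapPoint, Projectivization.mk_eq_mk_iff']
  exact ⟨g a, funext fun i => by simp [← ha, Units.smul_def]⟩

theorem mapPoint_one (p : Projectivization Ω (Fin 5 → Ω)) : mapPoint (1 : Ω ≃ₐ[F] Ω) p = p := by
  conv_rhs => rw [← p.mk_rep]
  rfl

theorem mapPoint_mul (g h : Ω ≃ₐ[F] Ω) (p : Projectivization Ω (Fin 5 → Ω)) :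
    mapPoint (g * h) p = mapPoint g (mapPoint h p) := by
  change _ = mapPoint g (Projectivization.mk _ _ _)
  rw [mapPoint_mk]
  rfl

theorem mapPoint_singularPoint (g : Ω ≃ₐ[F] Ω) (s t : Ω) :
    mapPoint g (singularPoint s t) = singularPoint (g s) (g t) := by
  rw [singularPoint, mapPoint_mk]
  congr
  funext i
  fin_cases i <;> simp [singularVector]

theorem exists_mapPoint_singularPoint_eq {ι : Type*} [Fintype ι] [DecidableEq ι] {b : ι → Ω}
    {π : Equiv.Perm ι} (g : Ω ≃ₐ[F] Ω) (hg : ∀ x, g (b x) = b (π x)) (hι : Fintype.card ι = 3)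
    (hπ : ∀ x, π x ≠ x) (x y : ι) :
    ∃ h : Ω ≃ₐ[F] Ω,
      mapPoint h (singularPoint (b x) (b (π x))) = singularPoint (b y) (b (π y)) := by
  have hstep : ∀ x, mapPoint g (singularPoint (b x) (b (π x))) =
      singularPoint (b (π x)) (b (π (π x))) := fun x => by
    rw [mapPoint_singularPoint, hg, hg]
  rcases π.eq_or_eq_or_eq_of_card_eq_three hι hπ x y with rfl | rfl | rfl
  · exact ⟨1, mapPoint_one _⟩
  · exact ⟨g, hstep x⟩
  · exact ⟨g * g, by rw [mapPoint_mul, hstep, hstep]⟩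

end mapPoint

theorem pow_card_ne_self_of_adjoin_eq_top {F E : Type*} [Field F] [Fintype F] [Field E]
    [Algebra F E] [FiniteDimensional F E] (hE : Module.finrank F E ≠ 1) {β : E}
    (hβ : Algebra.adjoin F {β} = ⊤) : β ^ Fintype.card F ≠ β := by
  intro h
  have := Module.finite_of_finite F (M := E)
  have : FiniteField.frobeniusAlgEquivOfAlgebraic F E = 1 :=
    AlgEquiv.coe_toAlgHom_injective (AlgHom.ext_of_adjoin_eq_top hβ (by simpa using h))
  apply hE
  rw [← FiniteField.orderOf_frobeniusAlgEquivOfAlgebraic, this, orderOf_one]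

theorem frobeniusAlgEquiv_comp_ne_self {F E Ω : Type*} [Field F] [Fintype F] [Field E]
    [Algebra F E] [FiniteDimensional F E] (hE : Module.finrank F E ≠ 1) {β : E}
    (hβ : Algebra.adjoin F {β} = ⊤) [Field Ω] [Algebra F Ω] (p : ℕ) [ExpChar Ω p]
    [PerfectRing Ω p] (σ : E →ₐ[F] Ω) :
    (FiniteField.frobeniusAlgEquiv F Ω p : Ω →ₐ[F] Ω).comp σ ≠ σ := fun h =>
  pow_card_ne_self_of_adjoin_eq_top hE hβ <| σ.injective <| by
    simpa using DFunLike.congr_fun h β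

theorem stmt19_general (F : Type) [Field F] [Finite F] (hchar : ringChar F ≠ 3)
    (E : Type) [Field E] [Algebra F E] [FiniteDimensional F E]
    (hdeg : Module.finrank F E = 3)
    (β : E) (hβ : Algebra.adjoin F {β} = ⊤)
    (Ω : Type) [Field Ω] [Algebra F Ω]
    [IsAlgClosed Ω] :
    let f : MvPolynomial (Fin 5) Ω :=
      (∏ σ : E →ₐ[F] Ω, (X 0 + C (σ β) * X 1 + C (σ β ^ 2) * X 2)) +
        X 3 * X 4 * (X 3 - X 4)
    let Sing : Set (Projectivization Ω (Fin 5 → Ω)) :=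
      {p | eval p.rep f = 0 ∧ ∀ i, eval p.rep (pderiv i f) = 0}
    -- the singular locus consists of the points with `x = y = 0` where two
    -- distinct conjugates of the linear form `u + βv + β²w` vanish
    Sing = {p | p.rep 3 = 0 ∧ p.rep 4 = 0 ∧
        ∃ σ τ : E →ₐ[F] Ω, σ ≠ τ ∧
          p.rep 0 + σ β * p.rep 1 + σ β ^ 2 * p.rep 2 = 0 ∧
          p.rep 0 + τ β * p.rep 1 + τ β ^ 2 * p.rep 2 = 0} ∧
    -- there are exactly three singular points
    Sing.ncard = 3 ∧
    -- and they are conjugate under the Galois group `Gal(Ω/F)`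
    (∀ p ∈ Sing, ∀ q ∈ Sing, ∃ g : Ω ≃ₐ[F] Ω, mapPoint g p = q) := by
  intro f Sing
  classical
  have := Fintype.ofFinite F
  have h3 : (3 : Ω) ≠ 0 := three_ne_zero_of_ringChar_ne_three (Algebra.ringChar_eq F Ω ▸ hchar)
  have hcard : Fintype.card (E →ₐ[F] Ω) = 3 := by rw [AlgHom.card, hdeg]
  have hb : Injective fun σ : E →ₐ[F] Ω => σ β := fun σ τ h =>
    AlgHom.ext_of_adjoin_eq_top hβ (by simpa using h)
  set φ := FiniteField.frobeniusAlgEquiv F Ω (ringExpChar Ω)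
  set π := (AlgEquiv.refl : E ≃ₐ[F] E).arrowCongr φ
  have hπ : ∀ σ, π σ ≠ σ := by
    simpa [π] using frobeniusAlgEquiv_comp_ne_self (by omega) hβ (ringExpChar Ω)
  have hSing : Sing = _ := Set.ext fun p => threefoldCubic_singular_iff h3 hcard hb p.rep
  have hrange := hSing.trans (setOf_eq_range_singularPoint hcard hπ hb)
  refine ⟨hSing, ?_, ?_⟩
  · rw [hrange, Set.ncard_range_of_injective (injective_singularPoint hcard hπ hb),
      Nat.card_eq_fintype_card, hcard]
  · rw [hrange]
    rintro _ ⟨σ, rfl⟩ _ ⟨τ, rfl⟩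
    exact exists_mapPoint_singularPoint_eq (b := fun σ => σ β) φ (fun σ => rfl) hcard hπ σ τ

/-- Let `F` be a finite field of characteristic `≠ 3`,
`E/F` the cubic extension and `β` a generator of `E/F`. The cubic threefold
`Y ⊆ ℙ⁴` defined by `Norm_{E/F}(u + βv + β²w) + xy(x-y) = 0` has, over an
algebraic closure `Ω`, exactly three singular points: the points with
`x = y = 0` where two of the three conjugate linear forms vanish; they are
permuted transitively by the Galois group. -/
theorem stmt19 (F : Type) [Field F] [Finite F] (hchar : ringChar F ≠ 3)
    (E : Type) [Field E] [Algebra F E] [FiniteDimensional F E]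
    (hdeg : Module.finrank F E = 3)
    (β : E) (hβ : Algebra.adjoin F {β} = ⊤)
    (Ω : Type) [Field Ω] [Algebra F Ω] [Algebra E Ω] [IsScalarTower F E Ω]
    [IsAlgClosed Ω] :
    let f : MvPolynomial (Fin 5) Ω :=
      (∏ σ : E →ₐ[F] Ω, (X 0 + C (σ β) * X 1 + C (σ β ^ 2) * X 2)) +
        X 3 * X 4 * (X 3 - X 4)
    let Sing : Set (Projectivization Ω (Fin 5 → Ω)) :=
      {p | eval p.rep f = 0 ∧ ∀ i, eval p.rep (pderiv i f) = 0}
    -- the singular locus consists of the points with `x = y = 0` where two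
    -- distinct conjugates of the linear form `u + βv + β²w` vanish
    Sing = {p | p.rep 3 = 0 ∧ p.rep 4 = 0 ∧
        ∃ σ τ : E →ₐ[F] Ω, σ ≠ τ ∧
          p.rep 0 + σ β * p.rep 1 + σ β ^ 2 * p.rep 2 = 0 ∧
          p.rep 0 + τ β * p.rep 1 + τ β ^ 2 * p.rep 2 = 0} ∧
    -- there are exactly three singular points
    Sing.ncard = 3 ∧
    -- and they are conjugate under the Galois group `Gal(Ω/F)`
    (∀ p ∈ Sing, ∀ q ∈ Sing, ∃ g : Ω ≃ₐ[F] Ω, mapPoint g p = q) :=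
  stmt19_general F hchar E hdeg β hβ Ω
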